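/- The lambda-number of the complete bipartite graph K_{m,n} equals m + n. -/

import Mathlib

/-- An L(2,1)-labelling: adjacent vertices get labels differing by at least 2,
vertices at distance exactly two get different labels. -/
def IsL21Labelling {V : Type*} (G : SimpleGraph V) (f : V → ℕ) : Prop :=
  (∀ u v, G.Adj u v → 2 ≤ |(f u : ℤ) - (f v : ℤ)|) ∧
  ∀ u v, G.dist u v = 2 → f u ≠ f v

/-- The lambda-number: the least `k` such that `G` has an L(2,1)-labelling with
labels in `{0, ..., k}` (equivalently, the minimum span). -/
noncomputable def lambdaNumber {V : Type*} (G : SimpleGraph V) : ℕ :=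
  sInf {k | ∃ f : V → ℕ, IsL21Labelling G f ∧ ∀ v, f v ≤ k}

/-- The nonzero zero-divisors of `R`. -/
def zdVertices (R : Type*) [CommRing R] : Set R :=
  {x | x ≠ 0 ∧ ∃ y : R, y ≠ 0 ∧ x * y = 0}

/-- The zero-divisor graph of `R`: vertices are nonzero zero-divisors,
distinct `x, y` adjacent iff `x * y = 0`. -/
def zdGraph (R : Type*) [CommRing R] : SimpleGraph (zdVertices R) where
  Adj x y := x ≠ y ∧ (x : R) * (y : R) = 0
  symm := by
    constructor
    rintro x y ⟨h1, h2⟩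
    exact ⟨h1.symm, by rwa [mul_comm] at h2⟩
  loopless := by constructor; rintro x ⟨h, _⟩; exact h rfl

/-- Beck's zero-divisor graph of `R`: vertices are all of `R`,
distinct `x, y` adjacent iff `x * y = 0`. -/
def beckGraph (R : Type*) [CommRing R] : SimpleGraph R where
  Adj x y := x ≠ y ∧ x * y = 0
  symm := by
    constructor
    rintro x y ⟨h1, h2⟩
    exact ⟨h1.symm, by rwa [mul_comm] at h2⟩
  loopless := by constructor; rintro x ⟨h, _⟩; exact h rfl

/-! In `K_{V,W}` with both sides nonempty any two distinct vertices are adjacent or at distance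
two, so an L(2,1)-labelling is injective. Moreover, if `a` is the largest label on one side and
it is below the largest label on the other side, then `a + 1` is unused: it exceeds every label
on its own side, and it differs by one from `a`, so it is no label on the other side. Thus the
`|V| + |W|` labels and this gap all lie in `{0, …, λ}`, giving `|V| + |W| ≤ λ`. Labelling
`V` by `0, …, |V| - 1` and `W` by `|V| + 1, …, |V| + |W|` attains the bound. -/

open SimpleGraph Function

theorem two_le_abs_natCast_sub_iff {a b : ℕ} :
    2 ≤ |(a : ℤ) - b| ↔ a + 2 ≤ b ∨ b + 2 ≤ a := by
  rw [le_abs']; omega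

theorem SimpleGraph.dist_eq_two_iff {V : Type*} {G : SimpleGraph V} {u v : V} :
    G.dist u v = 2 ↔ u ≠ v ∧ ¬ G.Adj u v ∧ (G.commonNeighbors u v).Nonempty := by
  rw [dist, ENat.toNat_eq_iff two_ne_zero, ← edist_eq_two_iff]
  rfl

theorem Fintype.card_le_of_injective_of_forall_ne {V : Type*} [Fintype V] {f : V → ℕ}
    (hf : Injective f) {k c : ℕ} (hk : ∀ v, f v ≤ k) (hc : c ≤ k) (hfc : ∀ v, f v ≠ c) :
    Fintype.card V ≤ k := by
  have hsub : Finset.univ.image f ⊆ (Finset.range (k + 1)).erase c := by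
    simp only [Finset.subset_iff, Finset.mem_image, Finset.mem_univ, true_and,
      Finset.mem_erase, Finset.mem_range, forall_exists_index, forall_apply_eq_imp_iff]
    exact fun v => ⟨hfc v, Nat.lt_succ_of_le (hk v)⟩
  simpa [Finset.card_image_of_injective _ hf,
    Finset.card_erase_of_mem (Finset.mem_range.mpr (Nat.lt_succ_of_le hc))] using
    Finset.card_le_card hsub

section Labelling

variable {V : Type*} {G : SimpleGraph V} {f : V → ℕ}

theorem IsL21Labelling.of_injective (hf : Injective f)
    (hadj : ∀ u v, G.Adj u v → 2 ≤ |(f u : ℤ) - (f v : ℤ)|) : IsL21Labelling G f :=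
  ⟨hadj, fun u v huv => hf.ne (by rintro rfl; simp at huv)⟩

theorem IsL21Labelling.injective (hf : IsL21Labelling G f)
    (hG : ∀ u v, u ≠ v → ¬ G.Adj u v → (G.commonNeighbors u v).Nonempty) :
    Injective f := by
  intro u v huv
  by_contra hne
  by_cases hadj : G.Adj u v
  · simpa [huv] using hf.1 u v hadj
  · exact hf.2 u v (dist_eq_two_iff.2 ⟨hne, hadj, hG u v hne hadj⟩) huv

theorem lambdaNumber_le (hf : IsL21Labelling G f) {k : ℕ} (hk : ∀ v, f v ≤ k) :
    lambdaNumber G ≤ k :=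
  Nat.sInf_le ⟨f, hf, hk⟩

theorem IsL21Labelling.exists_le_lambdaNumber (hf : IsL21Labelling G f) {k : ℕ}
    (hk : ∀ v, f v ≤ k) : ∃ g, IsL21Labelling G g ∧ ∀ v, g v ≤ lambdaNumber G :=
  Nat.sInf_mem (s := {k | ∃ f : V → ℕ, IsL21Labelling G f ∧ ∀ v, f v ≤ k})
    ⟨k, f, hf, hk⟩

end Labelling

theorem succ_ne_of_isMax_of_separated {V W : Type*} {a : V → ℕ} {b : W → ℕ}
    (hab : ∀ i j, 2 ≤ |(a i : ℤ) - b j|) {i₀ : V} (hmax : ∀ i, a i ≤ a i₀) :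
    (∀ i, a i ≠ a i₀ + 1) ∧ ∀ j, b j ≠ a i₀ + 1 :=
  ⟨fun i => by have := hmax i; omega,
    fun j => by have := two_le_abs_natCast_sub_iff.1 (hab i₀ j); omega⟩

section CompleteBipartite

variable {V W : Type*}

theorem completeBipartiteGraph_commonNeighbors_nonempty [Nonempty V] [Nonempty W]
    {u v : V ⊕ W} (hne : u ≠ v) (hna : ¬ (completeBipartiteGraph V W).Adj u v) :
    ((completeBipartiteGraph V W).commonNeighbors u v).Nonempty := by
  rcases u with i | j <;> rcases v with i' | j'
  · exact ⟨.inr (Classical.arbitrary W), by simp [mem_commonNeighbors, completeBipartiteGraph]⟩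
  · simp [completeBipartiteGraph] at hna
  · simp [completeBipartiteGraph] at hna
  · exact ⟨.inl (Classical.arbitrary V), by simp [mem_commonNeighbors, completeBipartiteGraph]⟩

theorem IsL21Labelling.exists_unused_label_completeBipartiteGraph [Finite V] [Finite W]
    [Nonempty V] [Nonempty W] {f : V ⊕ W → ℕ}
    (hf : IsL21Labelling (completeBipartiteGraph V W) f) :
    ∃ c, (∀ v, f v ≠ c) ∧ ∃ v, c ≤ f v := by
  have hsep : ∀ i j, 2 ≤ |(f (.inl i) : ℤ) - f (.inr j)| :=
    fun i j => hf.1 _ _ (by simp [completeBipartiteGraph])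
  obtain ⟨i₀, hi₀⟩ := Finite.exists_max (f ∘ Sum.inl)
  obtain ⟨j₀, hj₀⟩ := Finite.exists_max (f ∘ Sum.inr)
  simp only [comp_apply] at hi₀ hj₀
  rcases two_le_abs_natCast_sub_iff.1 (hsep i₀ j₀) with hlt | hlt
  · obtain ⟨hl, hr⟩ := succ_ne_of_isMax_of_separated hsep hi₀
    exact ⟨_, fun | .inl i => hl i | .inr j => hr j, .inr j₀, by omega⟩
  · obtain ⟨hr, hl⟩ := succ_ne_of_isMax_of_separated
      (fun j i => by rw [abs_sub_comm]; exact hsep i j) hj₀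
    exact ⟨_, fun | .inl i => hl i | .inr j => hr j, .inl i₀, by omega⟩

variable [Fintype V] [Fintype W]

noncomputable def completeBipartiteLabelling (V W : Type*) [Fintype V] [Fintype W] :
    V ⊕ W → ℕ :=
  Sum.elim (fun i => Fintype.equivFin V i) (fun j => Fintype.card V + 1 + Fintype.equivFin W j)

theorem completeBipartiteLabelling_le (v : V ⊕ W) :
    completeBipartiteLabelling V W v ≤ Fintype.card V + Fintype.card W := by
  rcases v with i | j
  · have := (Fintype.equivFin V i).isLt
    simp only [completeBipartiteLabelling, Sum.elim_inl]; omega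
  · have := (Fintype.equivFin W j).isLt
    simp only [completeBipartiteLabelling, Sum.elim_inr]; omega

theorem isL21Labelling_completeBipartiteLabelling :
    IsL21Labelling (completeBipartiteGraph V W) (completeBipartiteLabelling V W) := by
  refine .of_injective ?_ ?_
  · refine Injective.sumElim ?_ ?_ fun i j => ?_
    · exact Fin.val_injective.comp (Fintype.equivFin V).injective
    · exact fun j j' h => (Fintype.equivFin W).injective (Fin.ext (by omega))
    · have := (Fintype.equivFin V i).isLt; omega
  · rintro (i | j) (i' | j') hadj
    · simp [completeBipartiteGraph] at hadj
    · have := (Fintype.equivFin V i).isLt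
      simp only [two_le_abs_natCast_sub_iff, completeBipartiteLabelling, Sum.elim_inl,
        Sum.elim_inr]
      omega
    · have := (Fintype.equivFin V i').isLt
      simp only [two_le_abs_natCast_sub_iff, completeBipartiteLabelling, Sum.elim_inl,
        Sum.elim_inr]
      omega
    · simp [completeBipartiteGraph] at hadj

theorem lambdaNumber_completeBipartiteGraph [Nonempty V] [Nonempty W] :
    lambdaNumber (completeBipartiteGraph V W) = Fintype.card V + Fintype.card W := by
  have hf₀ := isL21Labelling_completeBipartiteLabelling (V := V) (W := W)
  obtain ⟨f, hf, hf_le⟩ := hf₀.exists_le_lambdaNumber completeBipartiteLabelling_le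
  refine le_antisymm (lambdaNumber_le hf₀ completeBipartiteLabelling_le) ?_
  obtain ⟨c, hc, v, hcv⟩ := hf.exists_unused_label_completeBipartiteGraph
  have hinj := hf.injective fun _ _ => completeBipartiteGraph_commonNeighbors_nonempty
  simpa using Fintype.card_le_of_injective_of_forall_ne hinj hf_le (hcv.trans (hf_le v)) hc

end CompleteBipartite

/-- the lambda-number of the complete bipartite graph `K_{m,n}` is `m + n`. -/
theorem lambda_completeBipartite (m n : ℕ) (hm : 0 < m) (hn : 0 < n) :
    lambdaNumber (completeBipartiteGraph (Fin m) (Fin n)) = m + n := by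
  have : Nonempty (Fin m) := ⟨⟨0, hm⟩⟩
  have : Nonempty (Fin n) := ⟨⟨0, hn⟩⟩
  simpa using lambdaNumber_completeBipartiteGraph (V := Fin m) (W := Fin n)
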